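/- The function g(k) = 2^k·(ln 2)·( ((k+1)/2^k)^2·(k/2^k) + 2·√( ((k+1)/2^k)^2·(1/2^k)·(1 − ((k+1)/2^k)^3) ) ) (i.e., g(k) = 2^k·ln 2 / r(k,3)) is strictly decreasing in the integer variable k for k ≥ 7. -/

import Mathlib

/-!
Pulling the powers of `2` inside, `g k = log 2 * (k (k+1)² / 4^k + 2 √((k+1)²/2^k - (k+1)⁵/16^k))`.
The first summand decreases as soon as `k ≥ 2`. For the radicand, already the positive part
`(k+2)²/2^(k+1)` at `k + 1` is at most the whole radicand at `k`; after clearing denominators this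
is `2 (k+1)⁵ ≤ (k² - 2) 8^k`, which holds from `k = 7` on by induction.
-/

/-- `g(k) = 2^k * ln 2 * ( ((k+1)/2^k)^2 * (k/2^k)
  + 2 * √( ((k+1)/2^k)^2 * (1/2^k) * (1 - ((k+1)/2^k)^3) ) )`,
i.e. `g(k) = 2^k * ln 2 / r(k,3)`. -/
noncomputable def g (k : ℕ) : ℝ :=
  2 ^ k * Real.log 2 * ( ((k + 1 : ℝ) / 2 ^ k) ^ 2 * (k / 2 ^ k)
    + 2 * Real.sqrt (((k + 1 : ℝ) / 2 ^ k) ^ 2 * (1 / 2 ^ k)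
        * (1 - ((k + 1 : ℝ) / 2 ^ k) ^ 3)) )

open Real

lemma two_mul_succ_pow_five_add_le (k : ℕ) (hk : 7 ≤ k) :
    2 * (k + 1) ^ 5 + 2 * 8 ^ k ≤ k ^ 2 * 8 ^ k := by
  induction k, hk using Nat.le_induction with
  | base => norm_num
  | succ n _ ih =>
    have h_pow : (n + 2) ^ 5 ≤ 8 * (n + 1) ^ 5 := by
      nlinarith [Nat.pow_le_pow_left (show 2 * (n + 2) ≤ 3 * (n + 1) by omega) 5]
    have h_sq : n ^ 2 * 8 ^ n ≤ (n + 1) ^ 2 * 8 ^ n := Nat.mul_le_mul_right _ (by nlinarith)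
    rw [pow_succ 8 n]
    nlinarith

lemma g_eq (k : ℕ) :
    g k = log 2 * (k * (k + 1) ^ 2 / 4 ^ k
      + 2 * √((k + 1) ^ 2 / 2 ^ k - (k + 1) ^ 5 / 16 ^ k)) := by
  have h4 : (4 : ℝ) ^ k = (2 ^ k) ^ 2 := by rw [← pow_mul, mul_comm, pow_mul]; norm_num
  have h16 : (16 : ℝ) ^ k = (2 ^ k) ^ 4 := by rw [← pow_mul, mul_comm, pow_mul]; norm_num
  have h_radicand : ((k + 1 : ℝ) / 2 ^ k) ^ 2 * (1 / 2 ^ k) * (1 - ((k + 1 : ℝ) / 2 ^ k) ^ 3)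
      = ((2 ^ k)⁻¹) ^ 2 * ((k + 1) ^ 2 / 2 ^ k - (k + 1) ^ 5 / 16 ^ k) := by
    rw [h16]; field_simp
  rw [g, h_radicand, sqrt_mul (by positivity), sqrt_sq (by positivity), h4]
  field_simp

lemma cubic_div_four_pow_succ_lt (k : ℕ) (hk : 2 ≤ k) :
    ((k : ℝ) + 1) * (k + 2) ^ 2 / 4 ^ (k + 1) < k * (k + 1) ^ 2 / 4 ^ k := by
  have hk' : (2 : ℝ) ≤ k := by exact_mod_cast hk
  rw [div_lt_div_iff₀ (by positivity) (by positivity), pow_succ (4 : ℝ)]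
  have h_cubic : ((k : ℝ) + 1) * (k + 2) ^ 2 < 4 * (k * (k + 1) ^ 2) := by nlinarith
  nlinarith [mul_lt_mul_of_pos_right h_cubic (by positivity : (0 : ℝ) < 4 ^ k)]

lemma radicand_succ_le (k : ℕ) (hk : 7 ≤ k) :
    ((k : ℝ) + 2) ^ 2 / 2 ^ (k + 1) - (k + 2) ^ 5 / 16 ^ (k + 1)
      ≤ ((k : ℝ) + 1) ^ 2 / 2 ^ k - (k + 1) ^ 5 / 16 ^ k := by
  have h8 : (8 : ℝ) ^ k = (2 ^ k) ^ 3 := by rw [← pow_mul, mul_comm, pow_mul]; norm_num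
  have h16 : (16 : ℝ) ^ k = (2 ^ k) ^ 4 := by rw [← pow_mul, mul_comm, pow_mul]; norm_num
  have h_key : 2 * ((k : ℝ) + 1) ^ 5 + 2 * (2 ^ k) ^ 3 ≤ k ^ 2 * (2 ^ k) ^ 3 := by
    rw [← h8]; exact_mod_cast two_mul_succ_pow_five_add_le k hk
  have hx : (0 : ℝ) < 2 ^ k := by positivity
  have h_pos_part : ((k : ℝ) + 2) ^ 2 / 2 ^ (k + 1)
      ≤ ((k : ℝ) + 1) ^ 2 / 2 ^ k - (k + 1) ^ 5 / 16 ^ k := by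
    rw [h16, pow_succ (2 : ℝ), div_sub_div _ _ hx.ne' (by positivity),
      div_le_div_iff₀ (by positivity) (by positivity)]
    nlinarith [mul_le_mul_of_nonneg_right h_key (by positivity : (0 : ℝ) ≤ (2 ^ k) ^ 2)]
  have h_neg_part : (0 : ℝ) ≤ ((k : ℝ) + 2) ^ 5 / 16 ^ (k + 1) := by positivity
  linarith

lemma g_succ_lt (k : ℕ) (hk : 7 ≤ k) : g (k + 1) < g k := by
  rw [g_eq, g_eq]
  refine mul_lt_mul_of_pos_left ?_ (log_pos one_lt_two)
  have h_lead := cubic_div_four_pow_succ_lt k (by omega)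
  have h_sqrt := sqrt_le_sqrt (radicand_succ_le k hk)
  push_cast
  rw [show (k : ℝ) + 1 + 1 = k + 2 by ring]
  linarith

/-- The function `g(k) = 2^k * ln 2 / r(k,3)` is strictly decreasing in the integer
variable `k` for `k ≥ 7`. -/
theorem g_strictAntiOn : StrictAntiOn g (Set.Ici 7) :=
  strictAntiOn_of_succ_lt Set.ordConnected_Ici fun k _ hk _ => g_succ_lt k hk
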